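/- arXiv:2408.00313 — 2 statements merged into one kernel-verified Lean document; each statement's English description precedes it below -/
import Mathlib

section
/- There is no D_4^- singularity on any generalized timelike minimal surface in L^3: if f is a generalized timelike minimal surface with real Weierstrass data (g1, g2, ω1 du, ω2 dv), then for every point p the germ of f at p is not A-equivalent to the D_4^- singularity f_{D4-}(u,v) = (uv, u^2 - 3v^2, u^2v - v^3) at the origin. -/
noncomputable section

open Real Filter

abbrev R2 : Type := ℝ × ℝ
abbrev R3 : Type := ℝ × ℝ × ℝ

/-- The partial derivative in the `u`-direction. -/
def pu (f : R2 → R3) (p : R2) : R3 := fderiv ℝ f p (1, 0)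
/-- The partial derivative in the `v`-direction. -/
def pv (f : R2 → R3) (p : R2) : R3 := fderiv ℝ f p (0, 1)

/-- Determinant of three column vectors in ℝ³. -/
def det3 (a b c : R3) : ℝ :=
  a.1 * (b.2.1 * c.2.2 - b.2.2 * c.2.1)
  - b.1 * (a.2.1 * c.2.2 - a.2.2 * c.2.1)
  + c.1 * (a.2.1 * b.2.2 - a.2.2 * b.2.1)

/-- Determinant of two vectors in ℝ². -/
def det2 (a b : R2) : ℝ := a.1 * b.2 - a.2 * b.1

/-- Euclidean inner product on ℝ³. -/
def ip3 (a b : R3) : ℝ := a.1 * b.1 + a.2.1 * b.2.1 + a.2.2 * b.2.2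

/-- `f : ℝ² → ℝ³ = 𝕃³` is the generalized timelike minimal surface with real Weierstrass
data `(g1, g2, w1 du, w2 dv)`: it is smooth, its partial derivatives are
`f_u = (ω1/2)·(-1-g1², 1-g1², 2g1)` and `f_v = (ω2/2)·(1+g2², 1-g2², -2g2)`
(which encodes the Weierstrass-type integral representation), and it is an immersion
on an open dense set. -/
structure IsGTMS (f : R2 → R3) (g1 g2 w1 w2 : ℝ → ℝ) : Prop where
  smooth_f : ContDiff ℝ (⊤ : ℕ∞) f
  smooth_g1 : ContDiff ℝ (⊤ : ℕ∞) g1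
  smooth_g2 : ContDiff ℝ (⊤ : ℕ∞) g2
  smooth_w1 : ContDiff ℝ (⊤ : ℕ∞) w1
  smooth_w2 : ContDiff ℝ (⊤ : ℕ∞) w2
  deriv_u : ∀ p : R2, pu f p =
    ((-1 - g1 p.1 ^ 2) * w1 p.1 / 2, (1 - g1 p.1 ^ 2) * w1 p.1 / 2, g1 p.1 * w1 p.1)
  deriv_v : ∀ p : R2, pv f p =
    ((1 + g2 p.2 ^ 2) * w2 p.2 / 2, (1 - g2 p.2 ^ 2) * w2 p.2 / 2, -(g2 p.2 * w2 p.2))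
  dense_immersion : Dense {p : R2 | Function.Injective (fderiv ℝ f p)}

/-- `Φ` is a germ of diffeomorphism at `p`. -/
def IsLocalDiffeoAt {E F : Type*} [NormedAddCommGroup E] [NormedSpace ℝ E]
    [NormedAddCommGroup F] [NormedSpace ℝ F] (Φ : E → F) (p : E) : Prop :=
  ∃ (U : Set E) (V : Set F) (Φinv : F → E),
    IsOpen U ∧ p ∈ U ∧ IsOpen V ∧ Φ p ∈ V ∧
    ContDiffOn ℝ (⊤ : ℕ∞) Φ U ∧ ContDiffOn ℝ (⊤ : ℕ∞) Φinv V ∧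
    Set.MapsTo Φ U V ∧ Set.MapsTo Φinv V U ∧
    (∀ x ∈ U, Φinv (Φ x) = x) ∧ (∀ y ∈ V, Φ (Φinv y) = y)

/-- 𝒜-equivalence of the germ of `f1` at `p1` and the germ of `f2` at `p2`. -/
def AEquiv (f1 : R2 → R3) (p1 : R2) (f2 : R2 → R3) (p2 : R2) : Prop :=
  ∃ (Φ : R2 → R2) (Ψ : R3 → R3),
    IsLocalDiffeoAt Φ p1 ∧ Φ p1 = p2 ∧
    IsLocalDiffeoAt Ψ (f1 p1) ∧ Ψ (f1 p1) = f2 p2 ∧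
    ∀ᶠ x in nhds p1, Ψ (f1 x) = f2 (Φ x)

/-- The canonical unit normal of a generalized timelike minimal surface. -/
def gtmsNormal (g1 g2 : ℝ → ℝ) (p : R2) : R3 :=
  (Real.sqrt ((1 - g1 p.1 * g2 p.2) ^ 2 + 2 * (g1 p.1 + g2 p.2) ^ 2))⁻¹ •
    (g1 p.1 + g2 p.2, -g1 p.1 + g2 p.2, 1 + g1 p.1 * g2 p.2)

/-- The signed area density function `λ = det(f_u, f_v, n)`. -/
def areaDensity (f : R2 → R3) (g1 g2 : ℝ → ℝ) (p : R2) : ℝ :=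
  det3 (pu f p) (pv f p) (gtmsNormal g1 g2 p)

/-- `f` is a front at `p`: the Legendrian lift `(f, n)` is an immersion at `p`,
where `n` is the canonical unit normal. -/
def IsFrontAt (f : R2 → R3) (g1 g2 : ℝ → ℝ) (p : R2) : Prop :=
  Function.Injective (fderiv ℝ (fun q => (f q, gtmsNormal g1 g2 q)) p)

/-- The differential of `f` at `p` has rank one. -/
def RankOne (f : R2 → R3) (p : R2) : Prop :=
  LinearMap.rank (fderiv ℝ f p).toLinearMap = 1

/-- Directional derivative of `F` along the vector field `X`. -/
def vD (X : R2 → R2) (F : R2 → R3) : R2 → R3 := fun q => fderiv ℝ F q (X q)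

/-- `φ_i = g_i' / (g_i² ω_i)`. -/
def phiW (g w : ℝ → ℝ) : ℝ → ℝ := fun t => deriv g t / (g t ^ 2 * w t)
/-- `Φ_i = (g_i/g_i') φ_i'`. -/
def PhiW (g w : ℝ → ℝ) : ℝ → ℝ := fun t => g t / deriv g t * deriv (phiW g w) t

/-- standard cuspidal butterfly -/
def fCBF : R2 → R3 := fun q =>
  (q.1, 5 * q.2 ^ 4 + 2 * q.1 * q.2, 4 * q.2 ^ 5 + q.1 * q.2 ^ 2 - q.1 ^ 2)
/-- standard cuspidal S₁⁺ singularity -/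
def fCS1p : R2 → R3 := fun q => (q.1, q.2 ^ 2, q.2 ^ 3 * (q.1 ^ 2 + q.2 ^ 2))
/-- standard cuspidal S₁⁻ singularity -/
def fCS1m : R2 → R3 := fun q => (q.1, q.2 ^ 2, q.2 ^ 3 * (q.1 ^ 2 - q.2 ^ 2))
/-- standard cuspidal edge -/
def fCE : R2 → R3 := fun q => (q.1, q.2 ^ 2, q.2 ^ 3)
/-- standard (2,5)-cuspidal edge -/
def fCE25 : R2 → R3 := fun q => (q.1, q.2 ^ 2, q.2 ^ 5)
/-- standard cuspidal beaks -/
def fCBK : R2 → R3 := fun q =>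
  (q.2, q.1 ^ 3 - q.1 * q.2 ^ 2, 3 * q.1 ^ 4 - 2 * q.1 ^ 2 * q.2 ^ 2)
/-- standard cuspidal lips -/
def fCLP : R2 → R3 := fun q =>
  (q.2, q.1 ^ 3 + q.1 * q.2 ^ 2, 3 * q.1 ^ 4 + 2 * q.1 ^ 2 * q.2 ^ 2)
/-- standard D₄⁺ singularity -/
def fD4p : R2 → R3 := fun q =>
  (q.1 * q.2, q.1 ^ 2 + 3 * q.2 ^ 2, q.1 ^ 2 * q.2 + q.2 ^ 3)
/-- standard D₄⁻ singularity -/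
def fD4m : R2 → R3 := fun q =>
  (q.1 * q.2, q.1 ^ 2 - 3 * q.2 ^ 2, q.1 ^ 2 * q.2 - q.2 ^ 3)

/-- From a local diffeo, extract an open nbhd on which Φ is injective, everywhere
differentiable with injective differential. -/
lemma IsLocalDiffeoAt.nice {E F : Type*} [NormedAddCommGroup E] [NormedSpace ℝ E]
    [NormedAddCommGroup F] [NormedSpace ℝ F] {Φ : E → F} {p : E}
    (h : IsLocalDiffeoAt Φ p) :
    ∃ U : Set E, IsOpen U ∧ p ∈ U ∧ Set.InjOn Φ U ∧
      ∀ x ∈ U, DifferentiableAt ℝ Φ x ∧ Function.Injective (fderiv ℝ Φ x) := by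
  obtain ⟨U, V, Φinv, hUo, hpU, hVo, _, hΦ, hΦinv, hmap, _, hli, _⟩ := h
  refine ⟨U, hUo, hpU, ?_, fun x hx => ?_⟩
  · intro a ha b hb hab
    rw [← hli a ha, ← hli b hb, hab]
  · have hdΦ : DifferentiableAt ℝ Φ x :=
      (hΦ.contDiffAt (hUo.mem_nhds hx)).differentiableAt (by simp)
    have hdΦinv : DifferentiableAt ℝ Φinv (Φ x) :=
      (hΦinv.contDiffAt (hVo.mem_nhds (hmap hx))).differentiableAt (by simp)
    refine ⟨hdΦ, ?_⟩
    have hev : (fun y => Φinv (Φ y)) =ᶠ[nhds x] id :=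
      Filter.eventually_of_mem (hUo.mem_nhds hx) (fun y hy => hli y hy)
    have hcomp : fderiv ℝ (Φinv ∘ Φ) x = (fderiv ℝ Φinv (Φ x)).comp (fderiv ℝ Φ x) :=
      fderiv_comp x hdΦinv hdΦ
    have hid : fderiv ℝ (fun y => Φinv (Φ y)) x = fderiv ℝ (id : E → E) x :=
      hev.fderiv_eq
    rw [fderiv_id] at hid
    intro v w hvw
    have h1 : (fderiv ℝ Φinv (Φ x)).comp (fderiv ℝ Φ x) = ContinuousLinearMap.id ℝ E := by
      rw [← hcomp]; exact hid
    have h2 := congrArg (fun L : E →L[ℝ] E => L v) h1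
    have h3 := congrArg (fun L : E →L[ℝ] E => L w) h1
    simp only [ContinuousLinearMap.comp_apply, ContinuousLinearMap.id_apply] at h2 h3
    rw [← h2, ← h3, hvw]

lemma fD4m_fderiv_apply (q : R2) (a b : ℝ) :
    fderiv ℝ fD4m q (a, b) =
      (q.2 * a + q.1 * b, 2 * q.1 * a - 6 * q.2 * b,
        2 * q.1 * q.2 * a + (q.1 ^ 2 - 3 * q.2 ^ 2) * b) := by
  have hfun : fD4m = fun q : R2 =>
      (q.1 * q.2, (q.1 * q.1 - 3 * (q.2 * q.2), q.1 * q.1 * q.2 - q.2 * q.2 * q.2)) := by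
    funext q
    simp only [fD4m]
    refine Prod.ext rfl (Prod.ext ?_ ?_) <;> ring
  have h1 : HasFDerivAt (fun q : R2 => q.1) (ContinuousLinearMap.fst ℝ ℝ ℝ) q :=
    hasFDerivAt_fst
  have h2 : HasFDerivAt (fun q : R2 => q.2) (ContinuousLinearMap.snd ℝ ℝ ℝ) q :=
    hasFDerivAt_snd
  have h : HasFDerivAt (fun q : R2 =>
      (q.1 * q.2, (q.1 * q.1 - 3 * (q.2 * q.2), q.1 * q.1 * q.2 - q.2 * q.2 * q.2))) _ q :=
    (h1.mul h2).prodMk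
      (((h1.mul h1).sub ((h2.mul h2).const_mul 3)).prodMk
        (((h1.mul h1).mul h2).sub ((h2.mul h2).mul h2)))
  rw [hfun, h.fderiv]
  refine Prod.ext ?_ (Prod.ext ?_ ?_) <;>
    simp [ContinuousLinearMap.prod_apply] <;> ring

lemma fD4m_diff (q : R2) : DifferentiableAt ℝ fD4m q := by
  unfold fD4m
  exact (differentiableAt_fst.mul differentiableAt_snd).prodMk
    (((differentiableAt_fst.pow 2).sub ((differentiableAt_snd.pow 2).const_mul 3)).prodMk
      (((differentiableAt_fst.pow 2).mul differentiableAt_snd).sub (differentiableAt_snd.pow 3)))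

lemma fD4m_fderiv_inj {q : R2} (hq : q ≠ ((0 : ℝ), (0 : ℝ))) :
    Function.Injective (fderiv ℝ fD4m q) := by
  have hker : ∀ v : R2, fderiv ℝ fD4m q v = 0 → v = 0 := by
    intro v hv
    have hv' : fderiv ℝ fD4m q (v.1, v.2) = 0 := by rwa [Prod.mk.eta]
    rw [fD4m_fderiv_apply] at hv'
    have e1 : q.2 * v.1 + q.1 * v.2 = 0 := congrArg Prod.fst hv'
    have e2 : 2 * q.1 * v.1 - 6 * q.2 * v.2 = 0 := congrArg (fun x : R3 => x.2.1) hv'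
    have hpos : 2 * q.1 ^ 2 + 6 * q.2 ^ 2 ≠ 0 := by
      intro h
      apply hq
      have h1 : q.1 = 0 := by nlinarith [sq_nonneg q.1, sq_nonneg q.2]
      have h2 : q.2 = 0 := by nlinarith [sq_nonneg q.1, sq_nonneg q.2]
      exact Prod.ext h1 h2
    have ha : (2 * q.1 ^ 2 + 6 * q.2 ^ 2) * v.1 = 0 := by
      linear_combination (6 * q.2) * e1 + q.1 * e2
    have hb : (2 * q.1 ^ 2 + 6 * q.2 ^ 2) * v.2 = 0 := by
      linear_combination (2 * q.1) * e1 - q.2 * e2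
    have hva : v.1 = 0 := by
      rcases mul_eq_zero.mp ha with h | h
      · exact absurd h hpos
      · exact h
    have hvb : v.2 = 0 := by
      rcases mul_eq_zero.mp hb with h | h
      · exact absurd h hpos
      · exact h
    exact Prod.ext hva hvb
  intro v w hvw
  have : fderiv ℝ fD4m q (v - w) = 0 := by rw [map_sub, hvw, sub_self]
  have := hker _ this
  exact sub_eq_zero.mp this

/-- there is no D₄⁻ singularity on any generalized timelike minimal
surface. -/
theorem no_D4_minus
    (f : R2 → R3) (g1 g2 w1 w2 : ℝ → ℝ) (hf : IsGTMS f g1 g2 w1 w2) :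
    ∀ p : R2, ¬ AEquiv f p fD4m (0, 0) := by
  intro p hA
  obtain ⟨Φ, Ψ, hΦd, hΦp, hΨd, _, hev⟩ := hA
  obtain ⟨U, hUo, hpU, hΦinj, hΦnice⟩ := hΦd.nice
  obtain ⟨W, hWo, hfpW, _, hΨnice⟩ := hΨd.nice
  obtain ⟨V, hVsub, hVo, hpV⟩ := eventually_nhds_iff.mp hev
  have hfdiff : ∀ x : R2, DifferentiableAt ℝ f x :=
    fun x => (hf.smooth_f.differentiable (by simp)).differentiableAt
  set O : Set R2 := (U ∩ V) ∩ f ⁻¹' W with hO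
  have hOo : IsOpen O := ((hUo.inter hVo).inter ((hf.smooth_f.continuous).isOpen_preimage W hWo))
  have hpO : p ∈ O := ⟨⟨hpU, hpV⟩, hfpW⟩
  -- chain rule identity on O
  have key : ∀ x ∈ O, (fderiv ℝ Ψ (f x)).comp (fderiv ℝ f x)
      = (fderiv ℝ fD4m (Φ x)).comp (fderiv ℝ Φ x) := by
    rintro x ⟨⟨hxU, hxV⟩, hxW⟩
    have hΨdx : DifferentiableAt ℝ Ψ (f x) := (hΨnice _ hxW).1
    have hΦdx : DifferentiableAt ℝ Φ x := (hΦnice _ hxU).1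
    have hev' : (fun y => Ψ (f y)) =ᶠ[nhds x] (fun y => fD4m (Φ y)) :=
      Filter.eventually_of_mem (hVo.mem_nhds hxV) (fun y hy => hVsub y hy)
    calc (fderiv ℝ Ψ (f x)).comp (fderiv ℝ f x)
        = fderiv ℝ (fun y => Ψ (f y)) x := (fderiv_comp x hΨdx (hfdiff x)).symm
      _ = fderiv ℝ (fun y => fD4m (Φ y)) x := hev'.fderiv_eq
      _ = (fderiv ℝ fD4m (Φ x)).comp (fderiv ℝ Φ x) := fderiv_comp x (fD4m_diff _) hΦdx
  -- the differential of f at p vanishes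
  have hzero0 : ∀ v : R2, fderiv ℝ fD4m ((0 : ℝ), (0 : ℝ)) v = 0 := by
    intro v
    have := fD4m_fderiv_apply ((0 : ℝ), (0 : ℝ)) v.1 v.2
    rw [Prod.mk.eta] at this
    simpa [Prod.zero_eq_mk] using this
  have hrank0 : ∀ v : R2, fderiv ℝ f p v = 0 := by
    intro v
    have hk := congrArg (fun L : R2 →L[ℝ] R3 => L v) (key p hpO)
    simp only [ContinuousLinearMap.comp_apply] at hk
    rw [hΦp] at hk
    rw [hzero0] at hk
    have hinj : Function.Injective (fderiv ℝ Ψ (f p)) := (hΨnice _ hfpW).2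
    apply hinj
    rw [hk, map_zero]
  -- hence w1 vanishes at p.1
  have hw1 : w1 p.1 = 0 := by
    have h0 : fderiv ℝ f p ((1 : ℝ), (0 : ℝ)) = 0 := hrank0 _
    have hpu := hf.deriv_u p
    rw [pu] at hpu
    rw [h0] at hpu
    have h1 : (0 : ℝ) = (-1 - g1 p.1 ^ 2) * w1 p.1 / 2 := congrArg Prod.fst hpu
    have hne : (-1 - g1 p.1 ^ 2) ≠ 0 := by nlinarith [sq_nonneg (g1 p.1)]
    have h2 : (-1 - g1 p.1 ^ 2) * w1 p.1 = 0 := by linarith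
    rcases mul_eq_zero.mp h2 with h | h
    · exact absurd h hne
    · exact h
  -- pick a nearby point q on the vertical line
  obtain ⟨ε, hε, hball⟩ := Metric.isOpen_iff.mp hOo p hpO
  set q : R2 := (p.1, p.2 + ε / 2) with hqdef
  have hqO : q ∈ O := by
    apply hball
    rw [Metric.mem_ball, Prod.dist_eq]
    have h1 : dist q.1 p.1 = 0 := by simp [hqdef]
    have h2 : dist q.2 p.2 = ε / 2 := by
      simp only [hqdef, Real.dist_eq]
      rw [show p.2 + ε / 2 - p.2 = ε / 2 by ring, abs_of_pos (by linarith)]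
    rw [h1, h2]
    exact max_lt hε (by linarith)
  have hqp : q ≠ p := by
    intro h
    have := congrArg Prod.snd h
    simp only [hqdef] at this
    linarith
  -- the u-partial of f vanishes at q
  have hpuq : fderiv ℝ f q ((1 : ℝ), (0 : ℝ)) = 0 := by
    have hpu := hf.deriv_u q
    rw [pu] at hpu
    have hq1 : q.1 = p.1 := rfl
    rw [hq1, hw1] at hpu
    rw [hpu]
    norm_num
  -- Φ q ≠ 0
  have hΦq : Φ q ≠ ((0 : ℝ), (0 : ℝ)) := by
    intro h
    exact hqp (hΦinj hqO.1.1 hpU (h.trans hΦp.symm))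
  -- derive contradiction
  have hk := congrArg (fun L : R2 →L[ℝ] R3 => L ((1 : ℝ), (0 : ℝ))) (key q hqO)
  simp only [ContinuousLinearMap.comp_apply] at hk
  rw [hpuq, map_zero] at hk
  have hD4inj : Function.Injective (fderiv ℝ fD4m (Φ q)) := fD4m_fderiv_inj hΦq
  have hz : fderiv ℝ Φ q ((1 : ℝ), (0 : ℝ)) = 0 := by
    apply hD4inj
    rw [← hk, map_zero]
  have hdΦinj : Function.Injective (fderiv ℝ Φ q) := (hΦnice _ hqO.1.1).2
  have h10 : ((1 : ℝ), (0 : ℝ)) ≠ (0 : R2) := by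
    intro h
    exact one_ne_zero (congrArg Prod.fst h)
  apply h10
  apply hdΦinj
  rw [hz, map_zero]
end
end

section
/- Characterization of the singular set via Weierstrass data: let f be a generalized timelike minimal surface with real Weierstrass data (g1, g2, ω1 du, ω2 dv), where g1 and g2 take finite real values. Then a point p is a singular point of f (i.e. the differential df_p is not injective) if and only if g1(p)g2(p) = 1 or ω1(p)ω2(p) = 0; that is, the singular set of f equals Σ^g(f) ∪ Σ^ω(f). -/
noncomputable section

open Real Filter

/-- characterization of the singular set via Weierstrass data. -/
theorem singular_set_characterization
    (f : R2 → R3) (g1 g2 w1 w2 : ℝ → ℝ) (hf : IsGTMS f g1 g2 w1 w2)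
    (p : R2) :
    ¬ Function.Injective (fderiv ℝ f p) ↔
      (g1 p.1 * g2 p.2 = 1 ∨ w1 p.1 * w2 p.2 = 0) := by
  set L := fderiv ℝ f p with hLdef
  have ha : L (1, 0) = ((-1 - g1 p.1 ^ 2) * w1 p.1 / 2, (1 - g1 p.1 ^ 2) * w1 p.1 / 2,
      g1 p.1 * w1 p.1) := hf.deriv_u p
  have hb : L (0, 1) = ((1 + g2 p.2 ^ 2) * w2 p.2 / 2, (1 - g2 p.2 ^ 2) * w2 p.2 / 2,
      -(g2 p.2 * w2 p.2)) := hf.deriv_v p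
  have hLv : ∀ v : R2, L v = v.1 • L (1, 0) + v.2 • L (0, 1) := by
    intro v
    have h : v = v.1 • ((1 : ℝ), (0 : ℝ)) + v.2 • ((0 : ℝ), (1 : ℝ)) := by
      ext <;> simp
    conv_lhs => rw [h]
    rw [map_add, map_smul, map_smul]
  have hniff : ¬ Function.Injective L ↔ ∃ v : R2, v ≠ 0 ∧ L v = 0 := by
    constructor
    · intro h
      rw [Function.not_injective_iff] at h
      obtain ⟨x, y, hxy, hne⟩ := h
      exact ⟨x - y, sub_ne_zero.mpr hne, by rw [map_sub, hxy, sub_self]⟩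
    · rintro ⟨v, hv0, hv⟩ h
      exact hv0 (h (by rw [hv, map_zero]))
  rw [hniff]
  set G1 := g1 p.1 with hG1def
  set G2 := g2 p.2 with hG2def
  set W1 := w1 p.1 with hW1def
  set W2 := w2 p.2 with hW2def
  constructor
  · rintro ⟨v, hv0, hv⟩
    by_contra hcon
    push_neg at hcon
    obtain ⟨hg, hw⟩ := hcon
    have hB : 1 - G1 * G2 ≠ 0 := sub_ne_zero.mpr (fun h => hg h.symm)
    rw [hLv v, ha, hb] at hv
    have hv' : v.1 * ((-1 - G1 ^ 2) * W1 / 2) + v.2 * ((1 + G2 ^ 2) * W2 / 2) = 0 ∧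
        v.1 * ((1 - G1 ^ 2) * W1 / 2) + v.2 * ((1 - G2 ^ 2) * W2 / 2) = 0 ∧
        v.1 * (G1 * W1) + v.2 * (-(G2 * W2)) = 0 := by
      simpa [Prod.ext_iff] using hv
    obtain ⟨e1, e2, e3⟩ := hv'
    have key : ∀ x : ℝ, x * ((1 - G1 * G2) * (W1 * W2)) = 0 → x = 0 := by
      intro x hx
      rcases mul_eq_zero.mp hx with h | h
      · exact h
      · exact absurd h (mul_ne_zero hB hw)
    -- eliminate v.2
    have hu1 : v.1 * (G1 + G2) * ((1 - G1 * G2) * (W1 * W2)) = 0 := by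
      linear_combination (2 * (G2 * W2)) * e2 + ((1 - G2 ^ 2) * W2) * e3
    have hu2 : v.1 * (G1 - G2) * ((1 - G1 * G2) * (W1 * W2)) = 0 := by
      linear_combination (2 * (G2 * W2)) * e1 + ((1 + G2 ^ 2) * W2) * e3
    have hu3 : v.1 * (G1 * G2 + 1) * ((1 - G1 * G2) * (W1 * W2)) = 0 := by
      linear_combination (-((1 - G2 ^ 2) * W2)) * e1 + ((1 + G2 ^ 2) * W2) * e2
    have hu1' := key _ hu1
    have hu2' := key _ hu2
    have hu3' := key _ hu3
    have hvg : v.1 * G1 = 0 := by linear_combination (hu1' + hu2') / 2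
    have hv1 : v.1 = 0 := by linear_combination hu3' - G2 * hvg
    -- eliminate v.1
    have hw1 : v.2 * (G1 + G2) * ((1 - G1 * G2) * (W1 * W2)) = 0 := by
      linear_combination (2 * (G1 * W1)) * e2 + (-((1 - G1 ^ 2) * W1)) * e3
    have hw2 : v.2 * (G1 - G2) * ((1 - G1 * G2) * (W1 * W2)) = 0 := by
      linear_combination (2 * (G1 * W1)) * e1 + ((1 + G1 ^ 2) * W1) * e3
    have hw3 : v.2 * (G1 * G2 + 1) * ((1 - G1 * G2) * (W1 * W2)) = 0 := by
      linear_combination ((1 - G1 ^ 2) * W1) * e1 + ((1 + G1 ^ 2) * W1) * e2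
    have hw1' := key _ hw1
    have hw2' := key _ hw2
    have hw3' := key _ hw3
    have hvg2 : v.2 * G2 = 0 := by linear_combination (hw1' - hw2') / 2
    have hv2 : v.2 = 0 := by linear_combination hw3' - G1 * hvg2
    exact hv0 (Prod.ext hv1 hv2)
  · rintro (hg | hw)
    · by_cases hW2 : W2 = 0
      · refine ⟨(0, 1), by norm_num [Prod.ext_iff], ?_⟩
        rw [show ((0 : ℝ), (1 : ℝ)) = ((0 : ℝ × ℝ).1, (1 : ℝ)) from rfl] at *
        rw [hb]
        simp [Prod.ext_iff, hW2]
      · refine ⟨(W2, G1 ^ 2 * W1), fun h => hW2 (by simpa using congrArg Prod.fst h), ?_⟩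
        rw [hLv, ha, hb]
        refine Prod.ext ?_ (Prod.ext ?_ ?_) <;> simp only [Prod.fst_add, Prod.snd_add,
          Prod.smul_fst, Prod.smul_snd, smul_eq_mul, Prod.fst_zero, Prod.snd_zero]
        · linear_combination (W1 * W2 * (G1 * G2 + 1) / 2) * hg
        · linear_combination (-(W1 * W2 * (G1 * G2 + 1) / 2)) * hg
        · linear_combination (-(W1 * W2 * G1)) * hg
    · rcases mul_eq_zero.mp hw with h | h
      · refine ⟨(1, 0), by norm_num [Prod.ext_iff], ?_⟩
        rw [ha]
        simp [Prod.ext_iff, h]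
      · refine ⟨(0, 1), by norm_num [Prod.ext_iff], ?_⟩
        rw [hb]
        simp [Prod.ext_iff, h]
end
end
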